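/- Let H be a real Hilbert space, C ⊆ H a nonempty convex subset, and T, U : C → C nonexpansive maps with a common fixed point p. Let u ∈ C and let N ∈ ℕ, N ≥ 1, satisfy N ≥ 2‖u − p‖. Then for every ε > 0 and every function δ : (0,1] → (0,1] there exist η ∈ [φ(ε,δ), 1] and x ∈ F_N(p, δ(η)) such that ‖u − x‖² ≤ ‖u − y‖² + ε for all y ∈ F_N(p, η), where φ(ε,δ) := min{ δ^{(i)}(1) : i ≤ r } and r := ⌈N²/(4ε)⌉. -/

import Mathlib

/-!
If the conclusion failed for every `η = δ⁽ⁱ⁾(1)` with `i ≤ r`, each point of `F_N(p, δ⁽ⁱ⁺¹⁾(1))`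
would lie more than `ε` above some point of `F_N(p, δ⁽ⁱ⁾(1))` in the value of `‖u - ·‖²`.
Descending from `p ∈ F_N(p, δ⁽ʳ⁺¹⁾(1))` in `r + 1` such steps would then give
`(r + 1) ε ≤ ‖u - p‖² ≤ N² / 4`, contradicting the choice of `r`.
-/

/-- `F_N(a, η) = {x ∈ C : ‖x - T x‖ ≤ η, ‖x - U x‖ ≤ η, ‖x - a‖ ≤ N}`. -/
def FN {H : Type*} [NormedAddCommGroup H] (C : Set H) (T U : H → H) (N : ℕ)
    (a : H) (η : ℝ) : Set H :=
  {x | x ∈ C ∧ ‖x - T x‖ ≤ η ∧ ‖x - U x‖ ≤ η ∧ ‖x - a‖ ≤ (N : ℝ)}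

/-- `φ(ε, δ) = min{δ⁽ⁱ⁾(1) : i ≤ r}` with `r = ⌈N²/(4ε)⌉`. -/
noncomputable def phi (N : ℕ) (ε : ℝ) (δ : ℝ → ℝ) : ℝ :=
  (Finset.range (⌈(N : ℝ) ^ 2 / (4 * ε)⌉₊ + 1)).inf' Finset.nonempty_range_add_one
    (fun i => δ^[i] 1)

theorem exists_mem_succ_forall_le_add {α : Type*} (S : ℕ → Set α) (f : α → ℝ)
    (hf : ∀ x ∈ S 0, 0 ≤ f x) {ε : ℝ} {r : ℕ} {p : α} (hp : p ∈ S (r + 1))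
    (hpr : f p < (r + 1) * ε) :
    ∃ i ≤ r, ∃ x ∈ S (i + 1), ∀ y ∈ S i, f x ≤ f y + ε := by
  by_contra! hstep
  have hgrow : ∀ i ≤ r + 1, ∀ x ∈ S i, i * ε ≤ f x := by
    intro i
    induction i with
    | zero => simpa using hf
    | succ i ih =>
      intro hi x hx
      obtain ⟨y, hy, hyx⟩ := hstep i (by omega) x hx
      have hy_ge := ih (by omega) y hy
      push_cast
      linarith
  have hp_ge := hgrow (r + 1) le_rfl p hp
  push_cast at hp_ge
  linarith

theorem phi_le_iterate {N : ℕ} {ε : ℝ} {δ : ℝ → ℝ} {i : ℕ}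
    (hi : i ≤ ⌈(N : ℝ) ^ 2 / (4 * ε)⌉₊) : phi N ε δ ≤ δ^[i] 1 :=
  Finset.inf'_le _ (Finset.mem_range.mpr (Nat.lt_succ_of_le hi))

theorem sq_lt_ceil_add_one_mul {a ε : ℝ} {N : ℕ} (ha : 0 ≤ a) (hε : 0 < ε)
    (haN : 2 * a ≤ N) : a ^ 2 < (⌈(N : ℝ) ^ 2 / (4 * ε)⌉₊ + 1) * ε := by
  have hceil : (N : ℝ) ^ 2 / (4 * ε) * ε ≤ ⌈(N : ℝ) ^ 2 / (4 * ε)⌉₊ * ε :=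
    mul_le_mul_of_nonneg_right (Nat.le_ceil _) hε.le
  have hdiv : (N : ℝ) ^ 2 / (4 * ε) * ε = (N : ℝ) ^ 2 / 4 := by
    field_simp
  nlinarith

theorem mem_FN_of_isFixedPt {H : Type*} [NormedAddCommGroup H] {C : Set H} {T U : H → H}
    {N : ℕ} {p : H} {η : ℝ} (hp : p ∈ C) (hTp : T p = p) (hUp : U p = p) (hη : 0 ≤ η) :
    p ∈ FN C T U N p η :=
  ⟨hp, by simpa [hTp], by simpa [hUp], by simp⟩

theorem stmt11_general {H : Type*} [NormedAddCommGroup H] (C : Set H) (T U : H → H)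
    (p : H) (hp : p ∈ C) (hTp : T p = p) (hUp : U p = p) (u : H) (N : ℕ) (hN : 2 * ‖u - p‖ ≤ (N : ℝ)) :
    ∀ ε : ℝ, 0 < ε → ∀ δ : ℝ → ℝ,
      (∀ ξ ∈ Set.Ioc (0 : ℝ) 1, δ ξ ∈ Set.Ioc (0 : ℝ) 1) →
      ∃ η ∈ Set.Icc (phi N ε δ) 1, ∃ x ∈ FN C T U N p (δ η),
        ∀ y ∈ FN C T U N p η, ‖u - x‖ ^ 2 ≤ ‖u - y‖ ^ 2 + ε := by
  intro ε hε δ hδ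
  have hiter : ∀ i, δ^[i] 1 ∈ Set.Ioc (0 : ℝ) 1 := fun i =>
    Set.MapsTo.iterate hδ i ⟨one_pos, le_rfl⟩
  obtain ⟨i, hi, x, hx, hx_min⟩ := exists_mem_succ_forall_le_add
    (fun i => FN C T U N p (δ^[i] 1)) (fun y => ‖u - y‖ ^ 2) (fun _ _ => by positivity)
    (mem_FN_of_isFixedPt hp hTp hUp (hiter _).1.le)
    (sq_lt_ceil_add_one_mul (norm_nonneg _) hε hN)
  rw [Function.iterate_succ_apply'] at hx
  exact ⟨δ^[i] 1, ⟨phi_le_iterate hi, (hiter i).2⟩, x, hx, hx_min⟩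

/-- Quantitative `ε`-projection argument: there exist `η ∈ [φ(ε,δ), 1]` and
`x ∈ F_N(p, δ(η))` such that `‖u - x‖² ≤ ‖u - y‖² + ε` for all `y ∈ F_N(p, η)`. -/
theorem stmt11 {H : Type*} [NormedAddCommGroup H] [InnerProductSpace ℝ H]
    (C : Set H) (hCne : C.Nonempty) (hCconv : Convex ℝ C)
    (T U : H → H) (hTmaps : Set.MapsTo T C C) (hUmaps : Set.MapsTo U C C)
    (hTne : ∀ x ∈ C, ∀ y ∈ C, ‖T x - T y‖ ≤ ‖x - y‖)
    (hUne : ∀ x ∈ C, ∀ y ∈ C, ‖U x - U y‖ ≤ ‖x - y‖)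
    (p : H) (hp : p ∈ C) (hTp : T p = p) (hUp : U p = p)
    (u : H) (hu : u ∈ C)
    (N : ℕ) (hN1 : 1 ≤ N) (hN : 2 * ‖u - p‖ ≤ (N : ℝ)) :
    ∀ ε : ℝ, 0 < ε → ∀ δ : ℝ → ℝ,
      (∀ ξ ∈ Set.Ioc (0 : ℝ) 1, δ ξ ∈ Set.Ioc (0 : ℝ) 1) →
      ∃ η ∈ Set.Icc (phi N ε δ) 1, ∃ x ∈ FN C T U N p (δ η),
        ∀ y ∈ FN C T U N p η, ‖u - x‖ ^ 2 ≤ ‖u - y‖ ^ 2 + ε :=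
  stmt11_general C T U p hp hTp hUp u N hN
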